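/- For every n ≥ 1 and all x, x′ ∈ X, |log Nₙ(x) − log Nₙ(x′)| ≤ ∑_{k=1}ⁿ ρ^{k−1}/(1 − ρ) ≤ 1/(1 − ρ)², where ρ = 1 − σ₋/σ₊. (This is the explicit form of Lemma 2's bound: the conditional log-likelihoods of the observations computed from two different initializations of the hidden chain differ by at most 1/(1 − ρ)², uniformly in n and in the observation functions.) -/

import Mathlib

open MeasureTheory

/-- `Nseq μ q g x n = ∫_{Xⁿ} ∏_{k=1}ⁿ q(x_{k−1}, x_k) g_k(x_k) μ(dx₁)⋯μ(dxₙ)`,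
with `x₀ := x` (for `n = 0` this is `1`, the empty product integrated against a
probability measure). The coordinate `xs k` of `xs : Fin n → X` plays the role
of `x_{k+1}`, and `g (k+1)` plays the role of `g_{k+1}`. -/
noncomputable def Nseq {X : Type*} [MeasurableSpace X] (μ : Measure X)
    (q : X → X → ℝ) (g : ℕ → X → ℝ) (x : X) (n : ℕ) : ℝ :=
  ∫ xs : Fin n → X,
    ∏ k : Fin n,
      q (if (k : ℕ) = 0 then x
         else xs ⟨(k : ℕ) - 1, Nat.lt_of_le_of_lt (Nat.sub_le _ _) k.isLt⟩) (xs k) *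
        g ((k : ℕ) + 1) (xs k)
    ∂(Measure.pi fun _ => μ)

/-!
Only the first transition factor `q(x, x₁)` of the integrand of `Nₙ(x)` depends on the initial
point, and `q(x, x₁) ≤ σ₊ ≤ (σ₊/σ₋) q(x′, x₁)`. Hence `Nₙ(x) ≤ (σ₊/σ₋) Nₙ(x′)` and symmetrically,
so `|log Nₙ(x) − log Nₙ(x′)| ≤ log (σ₊/σ₋) ≤ σ₊/σ₋ = 1/(1 − ρ)`, the `k = 1` term of the sum.
The sum is `(1 − ρ)⁻¹ ∑ ρ^k ≤ 1/(1 − ρ)²`.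
-/

theorem MeasureTheory.integral_le_mul_integral_of_ae_le_mul {α : Type*} [MeasurableSpace α]
    {μ : Measure α} {f g : α → ℝ} {c c' : ℝ} (hf : 0 ≤ᵐ[μ] f) (hg : 0 ≤ᵐ[μ] g)
    (hgm : AEStronglyMeasurable g μ) (hfg : f ≤ᵐ[μ] fun a => c * g a)
    (hgf : g ≤ᵐ[μ] fun a => c' * f a) :
    ∫ a, f a ∂μ ≤ c * ∫ a, g a ∂μ := by
  by_cases hgi : Integrable g μ
  · rw [← integral_const_mul]
    exact integral_mono_of_nonneg hf (hgi.const_mul c) hfg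
  -- `f` and `g` are integrable together, so here both integrals vanish.
  have hfi : ¬Integrable f μ := fun hfi => hgi <| (hfi.const_mul c').mono' hgm <| by
    filter_upwards [hg, hgf] with a ha hle
    rwa [Real.norm_of_nonneg ha]
  rw [integral_undef hfi, integral_undef hgi, mul_zero]

theorem Real.abs_log_sub_log_le_log_of_le_mul {a b r : ℝ} (ha : 0 ≤ a) (hb : 0 ≤ b) (hr : 1 ≤ r)
    (hab : a ≤ r * b) (hba : b ≤ r * a) : |Real.log a - Real.log b| ≤ Real.log r := by
  rcases ha.eq_or_lt with rfl | ha
  · obtain rfl : b = 0 := le_antisymm (by simpa using hba) hb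
    simpa using Real.log_nonneg hr
  have hb : 0 < b := by nlinarith
  have hr0 : 0 < r := by linarith
  rw [abs_sub_le_iff, sub_le_iff_le_add, sub_le_iff_le_add, ← Real.log_mul hr0.ne' hb.ne',
    ← Real.log_mul hr0.ne' ha.ne']
  exact ⟨Real.log_le_log ha hab, Real.log_le_log hb hba⟩

theorem sum_pow_div_one_sub_le {ρ : ℝ} (h0 : 0 ≤ ρ) (h1 : ρ < 1) (n : ℕ) :
    ∑ k ∈ Finset.range n, ρ ^ k / (1 - ρ) ≤ 1 / (1 - ρ) ^ 2 := by
  have hgeom := geom_sum_Ico_le_of_lt_one (m := 0) (n := n) h0 h1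
  rw [← Finset.range_eq_Ico, pow_zero] at hgeom
  rw [← Finset.sum_div, sq, ← div_div]
  gcongr

section Nseq

variable {X : Type*} {σm σp : ℝ} {q : X → X → ℝ} {g : ℕ → X → ℝ}

noncomputable def nseqIntegrand (q : X → X → ℝ) (g : ℕ → X → ℝ) (x : X) (n : ℕ)
    (xs : Fin n → X) : ℝ :=
  ∏ k : Fin n,
    q (if (k : ℕ) = 0 then x
       else xs ⟨(k : ℕ) - 1, Nat.lt_of_le_of_lt (Nat.sub_le _ _) k.isLt⟩) (xs k) *
      g ((k : ℕ) + 1) (xs k)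

theorem nseqIntegrand_nonneg (hq : ∀ x x', 0 ≤ q x x') (hg : ∀ k, 1 ≤ k → ∀ x, 0 ≤ g k x)
    (x : X) (n : ℕ) (xs : Fin n → X) : 0 ≤ nseqIntegrand q g x n xs :=
  Finset.prod_nonneg fun _ _ => mul_nonneg (hq _ _) (hg _ (Nat.le_add_left _ _) _)

theorem measurable_nseqIntegrand [MeasurableSpace X] (hq : Measurable (Function.uncurry q))
    (hg : ∀ k, 1 ≤ k → Measurable (g k)) (x : X) (n : ℕ) :
    Measurable (nseqIntegrand q g x n) := by
  refine Finset.measurable_prod _ fun k _ => Measurable.mul ?_ ?_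
  · have hprev : Measurable fun xs : Fin n → X => if (k : ℕ) = 0 then x
        else xs ⟨(k : ℕ) - 1, Nat.lt_of_le_of_lt (Nat.sub_le _ _) k.isLt⟩ := by
      by_cases hk : (k : ℕ) = 0
      · simp only [hk, if_true, measurable_const]
      · simp only [hk, if_false, measurable_pi_apply]
    exact hq.comp (hprev.prodMk (measurable_pi_apply k))
  · exact (hg _ (Nat.le_add_left _ _)).comp (measurable_pi_apply k)

theorem nseqIntegrand_le_mul (hσm : 0 < σm) (hql : ∀ x x', σm ≤ q x x')
    (hqu : ∀ x x', q x x' ≤ σp) (hg : ∀ k, 1 ≤ k → ∀ x, 0 ≤ g k x) (x x' : X) (n : ℕ)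
    (xs : Fin (n + 1) → X) :
    nseqIntegrand q g x (n + 1) xs ≤ σp / σm * nseqIntegrand q g x' (n + 1) xs := by
  simp only [nseqIntegrand, Fin.prod_univ_succ, Fin.val_zero, if_true, Fin.val_succ,
    Nat.add_one_ne_zero, if_false, ← mul_assoc]
  have hσp : 0 < σp := hσm.trans_le ((hql x x).trans (hqu x x))
  have hfirst : q x (xs 0) ≤ σp / σm * q x' (xs 0) := calc
    q x (xs 0) ≤ σp := hqu _ _
    _ = σp / σm * σm := (div_mul_cancel₀ σp hσm.ne').symm
    _ ≤ σp / σm * q x' (xs 0) := mul_le_mul_of_nonneg_left (hql _ _) (div_pos hσp hσm).le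
  gcongr ?_ * _ * _
  · exact Finset.prod_nonneg fun _ _ => mul_nonneg (hσm.le.trans (hql _ _)) (hg _ (Nat.le_add_left _ _) _)
  · exact hg _ le_rfl _

theorem Nseq_nonneg [MeasurableSpace X] (μ : Measure X) (hq : ∀ x x', 0 ≤ q x x')
    (hg : ∀ k, 1 ≤ k → ∀ x, 0 ≤ g k x) (x : X) (n : ℕ) : 0 ≤ Nseq μ q g x n :=
  integral_nonneg (nseqIntegrand_nonneg hq hg x n)

theorem Nseq_succ_le_mul [MeasurableSpace X] (μ : Measure X) (hσm : 0 < σm)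
    (hq : Measurable (Function.uncurry q)) (hql : ∀ x x', σm ≤ q x x')
    (hqu : ∀ x x', q x x' ≤ σp) (hgm : ∀ k, 1 ≤ k → Measurable (g k))
    (hg0 : ∀ k, 1 ≤ k → ∀ x, 0 ≤ g k x) (x x' : X) (n : ℕ) :
    Nseq μ q g x (n + 1) ≤ σp / σm * Nseq μ q g x' (n + 1) := by
  have hq0 : ∀ y y', 0 ≤ q y y' := fun y y' => hσm.le.trans (hql y y')
  exact integral_le_mul_integral_of_ae_le_mul
    (ae_of_all _ (nseqIntegrand_nonneg hq0 hg0 x _))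
    (ae_of_all _ (nseqIntegrand_nonneg hq0 hg0 x' _))
    (measurable_nseqIntegrand hq hgm x' _).aestronglyMeasurable
    (ae_of_all _ (nseqIntegrand_le_mul hσm hql hqu hg0 x x' n))
    (ae_of_all _ (nseqIntegrand_le_mul hσm hql hqu hg0 x' x n))

end Nseq

theorem log_likelihood_forgetting
    {X : Type*} [MeasurableSpace X] (μ : Measure X)
    (σm σp : ℝ) (hσm : 0 < σm)
    (q : X → X → ℝ) (hq : Measurable (Function.uncurry q))
    (hql : ∀ x x', σm ≤ q x x') (hqu : ∀ x x', q x x' ≤ σp)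
    (g : ℕ → X → ℝ) (hgm : ∀ k, 1 ≤ k → Measurable (g k))
    (hg0 : ∀ k, 1 ≤ k → ∀ x, 0 ≤ g k x)
    (n : ℕ) (hn : 1 ≤ n) (x x' : X) :
    |Real.log (Nseq μ q g x n) - Real.log (Nseq μ q g x' n)| ≤
        ∑ k ∈ Finset.range n, (1 - σm / σp) ^ k / (1 - (1 - σm / σp)) ∧
    ∑ k ∈ Finset.range n, (1 - σm / σp) ^ k / (1 - (1 - σm / σp)) ≤
        1 / (1 - (1 - σm / σp)) ^ 2 := by
  have hσ : σm ≤ σp := (hql x x).trans (hqu x x)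
  have hσp : 0 < σp := hσm.trans_le hσ
  have hρ0 : 0 ≤ 1 - σm / σp := sub_nonneg.2 ((div_le_one₀ hσp).2 hσ)
  refine ⟨?_, sum_pow_div_one_sub_le hρ0 (sub_lt_self _ (div_pos hσm hσp)) n⟩
  have hq0 : ∀ y y', 0 ≤ q y y' := fun y y' => hσm.le.trans (hql y y')
  obtain ⟨m, rfl⟩ := Nat.exists_eq_add_of_le' hn
  rw [sub_sub_cancel]
  calc _ ≤ Real.log (σp / σm) :=
        Real.abs_log_sub_log_le_log_of_le_mul (Nseq_nonneg μ hq0 hg0 x _)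
          (Nseq_nonneg μ hq0 hg0 x' _) ((one_le_div hσm).2 hσ)
          (Nseq_succ_le_mul μ hσm hq hql hqu hgm hg0 x x' m)
          (Nseq_succ_le_mul μ hσm hq hql hqu hgm hg0 x' x m)
    _ ≤ σp / σm := Real.log_le_self (div_pos hσp hσm).le
    _ = (1 - σm / σp) ^ 0 / (σm / σp) := by rw [pow_zero, one_div_div]
    _ ≤ ∑ k ∈ Finset.range (m + 1), (1 - σm / σp) ^ k / (σm / σp) :=
        Finset.single_le_sum (f := fun k => (1 - σm / σp) ^ k / (σm / σp))
          (fun k _ => by positivity) (Finset.mem_range.2 m.succ_pos)
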